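/- arXiv:1510.00197 — 4 statements merged into one kernel-verified Lean document; each statement's English description precedes it below -/
import Mathlib

section
/- Let G be a finite group and A a finite set. Then Rank(CA(G;A)) = Rank(CA(G;A) : ICA(G;A)) + Rank(ICA(G;A)), where ICA(G;A) is the group of units of CA(G;A). -/
/-- For `g ∈ G`, the shift cellular automaton `σ_g : A^G → A^G` with local map
`(x)μ_g = (g⁻¹)x`, i.e. `(h)(x)σ_g = x(g⁻¹ h)`, as an element of the full
transformation monoid on `A^G`. -/
def sigmaG (G : Type*) [Group G] (A : Type*) (g : G) : Function.End (G → A) :=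
  fun x h => x (g⁻¹ * h)

/-- `CA(G;A)`: the semigroup of all maps `A^G → A^G` commuting with the shift
`σ_g` for every `g ∈ G`. -/
def CAG (G : Type*) [Group G] (A : Type*) : Set (Function.End (G → A)) :=
  {τ | ∀ g : G, τ * sigmaG G A g = sigmaG G A g * τ}

/-- `ICA(G;A)`: the group of units of `CA(G;A)`, i.e. those `τ ∈ CA(G;A)`
having a two-sided inverse in `CA(G;A)`. -/
def ICAG (G : Type*) [Group G] (A : Type*) : Set (Function.End (G → A)) :=
  {τ | τ ∈ CAG G A ∧ ∃ φ ∈ CAG G A, τ * φ = 1 ∧ φ * τ = 1}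

/-- The rank of a finite semigroup (given as a subset `S` of an ambient magma,
closed under multiplication): the least cardinality of a subset generating `S`. -/
noncomputable def srank {M : Type*} [Mul M] (S : Set M) : ℕ :=
  sInf {k : ℕ | ∃ H : Finset M, H.card = k ∧ (Subsemigroup.closure (H : Set M) : Set M) = S}

/-- The relative rank `Rank(S : U)`: the least cardinality of a set `V` such
that `U ∪ V` generates `S`. -/
noncomputable def relrank {M : Type*} [Mul M] (S U : Set M) : ℕ :=
  sInf {k : ℕ | ∃ V : Finset M, V.card = k ∧ (Subsemigroup.closure (U ∪ ↑V) : Set M) = S}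

section Aux

variable {G : Type*} [Group G] {A : Type*}

lemma CAG_mul {a b : Function.End (G → A)} (ha : a ∈ CAG G A) (hb : b ∈ CAG G A) :
    a * b ∈ CAG G A := fun g => by
  rw [mul_assoc, hb g, ← mul_assoc, ha g, mul_assoc]

lemma ICAG_subset_CAG : ICAG G A ⊆ CAG G A := fun _ h => h.1

lemma ICAG_mul {a b : Function.End (G → A)} (ha : a ∈ ICAG G A) (hb : b ∈ ICAG G A) :
    a * b ∈ ICAG G A := by
  obtain ⟨haC, φ, hφC, h1, h2⟩ := ha
  obtain ⟨hbC, ψ, hψC, h3, h4⟩ := hb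
  refine ⟨CAG_mul haC hbC, ψ * φ, CAG_mul hψC hφC, ?_, ?_⟩
  · rw [mul_assoc, ← mul_assoc b, h3, one_mul, h1]
  · rw [mul_assoc, ← mul_assoc φ, h2, one_mul, h4]

/-- `CAG` as a subsemigroup. -/
def CAGsub (G : Type*) [Group G] (A : Type*) : Subsemigroup (Function.End (G → A)) where
  carrier := CAG G A
  mul_mem' := CAG_mul

/-- `ICAG` as a subsemigroup. -/
def ICAGsub (G : Type*) [Group G] (A : Type*) : Subsemigroup (Function.End (G → A)) where
  carrier := ICAG G A
  mul_mem' := ICAG_mul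

lemma mem_ICAG_of_bijective {a : Function.End (G → A)} (haC : a ∈ CAG G A)
    (hb : Function.Bijective a) : a ∈ ICAG G A := by
  obtain ⟨f, hf1, hf2⟩ := Function.bijective_iff_has_inverse.mp hb
  let ψ : Function.End (G → A) := f
  have h1 : a * ψ = 1 := funext fun x => hf2 x
  have h2 : ψ * a = 1 := funext fun x => hf1 x
  have hψC : (ψ : Function.End (G → A)) ∈ CAG G A := by
    intro g
    calc ψ * sigmaG G A g = ψ * sigmaG G A g * (a * ψ) := by rw [h1, mul_one]
      _ = ψ * ((sigmaG G A g * a) * ψ) := by simp only [mul_assoc]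
      _ = ψ * ((a * sigmaG G A g) * ψ) := by rw [haC g]
      _ = (ψ * a) * (sigmaG G A g * ψ) := by simp only [mul_assoc]
      _ = sigmaG G A g * ψ := by rw [h2, one_mul]
  exact ⟨haC, ψ, hψC, h1, h2⟩

lemma bijective_of_mem_ICAG {a : Function.End (G → A)} (ha : a ∈ ICAG G A) :
    Function.Bijective a := by
  obtain ⟨-, φ, -, h1, h2⟩ := ha
  have hl : Function.LeftInverse φ a := fun x => congrFun h2 x
  have hr : Function.RightInverse φ a := fun x => congrFun h1 x
  exact ⟨hl.injective, hr.surjective⟩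

lemma factor_mem_ICAG [Finite G] [Finite A] {a b : Function.End (G → A)}
    (haC : a ∈ CAG G A) (hbC : b ∈ CAG G A) (hab : a * b ∈ ICAG G A) :
    a ∈ ICAG G A ∧ b ∈ ICAG G A := by
  have hbij : Function.Bijective (a ∘ b) := bijective_of_mem_ICAG hab
  have hasurj : Function.Surjective a := Function.Surjective.of_comp hbij.surjective
  have hbinj : Function.Injective b := Function.Injective.of_comp hbij.injective
  constructor
  · exact mem_ICAG_of_bijective haC ((Finite.surjective_iff_bijective).mp hasurj)
  · exact mem_ICAG_of_bijective hbC ((Finite.injective_iff_bijective).mp hbinj)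

lemma ICAG_subset_closure [Finite G] [Finite A] {s : Set (Function.End (G → A))}
    (hs : (Subsemigroup.closure s : Set (Function.End (G → A))) = CAG G A) :
    ICAG G A ⊆ (Subsemigroup.closure (s ∩ ICAG G A) : Set (Function.End (G → A))) := by
  intro u hu
  have hu' : u ∈ Subsemigroup.closure s := by
    have : u ∈ (Subsemigroup.closure s : Set (Function.End (G → A))) := by
      rw [hs]; exact hu.1
    exact this
  refine Subsemigroup.closure_induction
    (p := fun x _ => x ∈ ICAG G A → x ∈ Subsemigroup.closure (s ∩ ICAG G A)) ?_ ?_ hu' hu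
  · intro x hx hxu
    exact Subsemigroup.subset_closure ⟨hx, hxu⟩
  · intro x y hx hy px py hxy
    have hxC : x ∈ CAG G A := by rw [← hs]; exact hx
    have hyC : y ∈ CAG G A := by rw [← hs]; exact hy
    obtain ⟨hxu, hyu⟩ := factor_mem_ICAG hxC hyC hxy
    exact mul_mem (px hxu) (py hyu)

end Aux

/-- Let G be a finite group and A a finite set.  Then
Rank(CA(G;A)) = Rank(CA(G;A) : ICA(G;A)) + Rank(ICA(G;A)). -/
theorem rank_CA_eq_relrank_add_rank_ICA (G : Type*) [Group G] [Finite G]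
    (A : Type*) [Finite A] :
    srank (CAG G A) = relrank (CAG G A) (ICAG G A) + srank (ICAG G A) := by
  classical
  haveI : Finite (Function.End (G → A)) := inferInstanceAs (Finite ((G → A) → (G → A)))
  -- closure of the full sets
  have hCAGcl : (Subsemigroup.closure (CAG G A) : Set (Function.End (G → A))) = CAG G A :=
    congrArg SetLike.coe (Subsemigroup.closure_eq (CAGsub G A))
  have hICAGcl : (Subsemigroup.closure (ICAG G A) : Set (Function.End (G → A))) = ICAG G A :=
    congrArg SetLike.coe (Subsemigroup.closure_eq (ICAGsub G A))
  have hCfin : (CAG G A).Finite := Set.toFinite _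
  have hIfin : (ICAG G A).Finite := Set.toFinite _
  -- nonemptiness of the three sInf sets
  have hS1 : {k : ℕ | ∃ H : Finset (Function.End (G → A)), H.card = k ∧
      (Subsemigroup.closure (H : Set (Function.End (G → A))) : Set (Function.End (G → A))) = CAG G A}.Nonempty := by
    refine ⟨hCfin.toFinset.card, hCfin.toFinset, rfl, ?_⟩
    rw [Set.Finite.coe_toFinset]; exact hCAGcl
  have hS2 : {k : ℕ | ∃ V : Finset (Function.End (G → A)), V.card = k ∧
      (Subsemigroup.closure (ICAG G A ∪ ↑V) : Set (Function.End (G → A))) = CAG G A}.Nonempty := by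
    refine ⟨hCfin.toFinset.card, hCfin.toFinset, rfl, ?_⟩
    rw [Set.Finite.coe_toFinset, Set.union_eq_self_of_subset_left ICAG_subset_CAG]
    exact hCAGcl
  have hS3 : {k : ℕ | ∃ H : Finset (Function.End (G → A)), H.card = k ∧
      (Subsemigroup.closure (H : Set (Function.End (G → A))) : Set (Function.End (G → A))) = ICAG G A}.Nonempty := by
    refine ⟨hIfin.toFinset.card, hIfin.toFinset, rfl, ?_⟩
    rw [Set.Finite.coe_toFinset]; exact hICAGcl
  apply le_antisymm
  · -- srank ≤ relrank + srank
    obtain ⟨V, hVcard, hV⟩ := Nat.sInf_mem hS2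
    obtain ⟨T, hTcard, hT⟩ := Nat.sInf_mem hS3
    have hVcard' : V.card = relrank (CAG G A) (ICAG G A) := hVcard
    have hTcard' : T.card = srank (ICAG G A) := hTcard
    have hTsub : (T : Set (Function.End (G → A))) ⊆ ICAG G A := by
      rw [← hT]; exact Subsemigroup.subset_closure
    have hVsub : (V : Set (Function.End (G → A))) ⊆ CAG G A := by
      rw [← hV]
      exact fun x hx => Subsemigroup.subset_closure (Set.mem_union_right _ hx)
    have hgen : (Subsemigroup.closure ((T ∪ V : Finset (Function.End (G → A))) : Set (Function.End (G → A))) : Set (Function.End (G → A))) = CAG G A := by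
      apply Set.Subset.antisymm
      · intro x hx
        have : Subsemigroup.closure ((T ∪ V : Finset (Function.End (G → A))) : Set (Function.End (G → A))) ≤ CAGsub G A := by
          apply Subsemigroup.closure_le.mpr
          rw [Finset.coe_union]
          rintro y (hy | hy)
          · exact ICAG_subset_CAG (hTsub hy)
          · exact hVsub hy
        exact this hx
      · rw [← hV]
        intro x hx
        have hle : Subsemigroup.closure (ICAG G A ∪ (V : Set (Function.End (G → A)))) ≤
            Subsemigroup.closure ((T ∪ V : Finset (Function.End (G → A))) : Set (Function.End (G → A))) := by
          apply Subsemigroup.closure_le.mpr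
          rintro y (hy | hy)
          · have : y ∈ (Subsemigroup.closure (T : Set (Function.End (G → A))) : Set (Function.End (G → A))) := by rw [hT]; exact hy
            exact Subsemigroup.closure_mono (by rw [Finset.coe_union]; exact Set.subset_union_left) this
          · exact Subsemigroup.subset_closure (by rw [Finset.coe_union]; exact Set.mem_union_right _ hy)
        exact hle hx
    calc srank (CAG G A) ≤ (T ∪ V).card := Nat.sInf_le ⟨T ∪ V, rfl, hgen⟩
      _ ≤ T.card + V.card := Finset.card_union_le _ _
      _ = relrank (CAG G A) (ICAG G A) + srank (ICAG G A) := by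
          rw [hTcard', hVcard', Nat.add_comm]
  · -- relrank + srank ≤ srank
    obtain ⟨W, hWcard, hW⟩ := Nat.sInf_mem hS1
    have hWcard' : W.card = srank (CAG G A) := hWcard
    set W1 := W.filter (· ∈ ICAG G A) with hW1
    set W2 := W.filter (fun x => ¬ x ∈ ICAG G A) with hW2
    have hWsub : (W : Set (Function.End (G → A))) ⊆ CAG G A := by
      rw [← hW]; exact Subsemigroup.subset_closure
    have hW1coe : (W1 : Set (Function.End (G → A))) = (W : Set (Function.End (G → A))) ∩ ICAG G A := by
      ext x; simp [hW1, Finset.mem_filter]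
    -- W1 generates ICAG
    have hgen1 : (Subsemigroup.closure (W1 : Set (Function.End (G → A))) : Set (Function.End (G → A))) = ICAG G A := by
      apply Set.Subset.antisymm
      · intro x hx
        have : Subsemigroup.closure (W1 : Set (Function.End (G → A))) ≤ ICAGsub G A := by
          apply Subsemigroup.closure_le.mpr
          rw [hW1coe]; exact Set.inter_subset_right
        exact this hx
      · rw [hW1coe]
        exact ICAG_subset_closure hW
    -- ICAG ∪ W2 generates CAG
    have hgen2 : (Subsemigroup.closure (ICAG G A ∪ (W2 : Set (Function.End (G → A)))) : Set (Function.End (G → A))) = CAG G A := by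
      apply Set.Subset.antisymm
      · intro x hx
        have : Subsemigroup.closure (ICAG G A ∪ (W2 : Set (Function.End (G → A)))) ≤ CAGsub G A := by
          apply Subsemigroup.closure_le.mpr
          rintro y (hy | hy)
          · exact ICAG_subset_CAG hy
          · exact hWsub (by simpa [hW2] using (Finset.mem_filter.mp (by exact_mod_cast hy)).1)
        exact this hx
      · rw [← hW]
        intro x hx
        have hle : Subsemigroup.closure (W : Set (Function.End (G → A))) ≤
            Subsemigroup.closure (ICAG G A ∪ (W2 : Set (Function.End (G → A)))) := by
          apply Subsemigroup.closure_le.mpr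
          intro y hy
          by_cases hyu : y ∈ ICAG G A
          · exact Subsemigroup.subset_closure (Set.mem_union_left _ hyu)
          · refine Subsemigroup.subset_closure (Set.mem_union_right _ ?_)
            simp only [hW2, Finset.coe_filter, Set.mem_setOf_eq]
            exact ⟨by exact_mod_cast hy, hyu⟩
        exact hle hx
    have h1 : srank (ICAG G A) ≤ W1.card := Nat.sInf_le ⟨W1, rfl, hgen1⟩
    have h2 : relrank (CAG G A) (ICAG G A) ≤ W2.card := Nat.sInf_le ⟨W2, rfl, hgen2⟩
    have hsplit : W1.card + W2.card = W.card :=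
      Finset.card_filter_add_card_filter_not (p := (· ∈ ICAG G A))
    calc relrank (CAG G A) (ICAG G A) + srank (ICAG G A) ≤ W2.card + W1.card :=
          Nat.add_le_add h2 h1
      _ = W.card := by rw [Nat.add_comm, hsplit]
      _ = srank (CAG G A) := hWcard'
end

section
/- Let n ≥ 2 be an integer and A a finite set of size q ≥ 2 and let d_1, …, d_ℓ be the divisors of n different from 1. Then the group ICA(ℤ_n; A) of invertible cellular automata over ℤ_n and A is isomorphic to the direct product (ℤ_{d_1} ≀ Sym_{α(d_1,q)}) × ⋯ × (ℤ_{d_ℓ} ≀ Sym_{α(d_ℓ,q)}) × Sym_q, where α(d,q) is Moreau's necklace-counting function. -/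
/-- A permutation of coordinates, as a multiplicative automorphism of
`(ℤ_d)^α` (written multiplicatively): `(w^π)_i = w_{π⁻¹(i)}`. -/
def permCoordAut (α : ℕ) (M : Type*) [Monoid M] (π : Equiv.Perm (Fin α)) :
    MulAut (Fin α → M) :=
  { Equiv.arrowCongr π (Equiv.refl M) with
    map_mul' := fun _ _ => rfl }

/-- The action of `Sym_α` on `(ℤ_d)^α` permuting the coordinates. -/
def wreathAct (d α : ℕ) : Equiv.Perm (Fin α) →* MulAut (Fin α → Multiplicative (ZMod d)) where
  toFun := permCoordAut α (Multiplicative (ZMod d))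
  map_one' := by ext v; rfl
  map_mul' := fun π ρ => by ext v; rfl

/-- The generalized symmetric group `ℤ_d ≀ Sym_α = (ℤ_d)^α ⋊ Sym_α`, where
`Sym_α` acts by permuting coordinates. -/
abbrev GenSym (d α : ℕ) :=
  SemidirectProduct (Fin α → Multiplicative (ZMod d)) (Equiv.Perm (Fin α)) (wreathAct d α)

open ArithmeticFunction in
/-- Moreau's necklace-counting function α(d,q) = (1/d) Σ_{b ∣ d} μ(d/b) q^b. -/
noncomputable def necklace (d q : ℕ) : ℕ :=
  ((∑ b ∈ d.divisors, (moebius (d / b) * (q : ℤ) ^ b)) / (d : ℤ)).toNat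

/-- The cyclic shift `σ : A^n → A^n` as a permutation of `A^n`. -/
def shiftPerm (n : ℕ) (A : Type*) : Equiv.Perm (ZMod n → A) where
  toFun x i := x (i - 1)
  invFun x i := x (i + 1)
  left_inv x := funext fun i => by simp
  right_inv x := funext fun i => by simp

/-- `ICA(ℤ_n;A) = CA(ℤ_n;A) ∩ Sym(A^n)`: the group of invertible cellular
automata, i.e. the centralizer of the shift in `Sym(A^n)`. -/
def ICAsub (n : ℕ) (A : Type*) : Subgroup (Equiv.Perm (ZMod n → A)) :=
  Subgroup.centralizer {shiftPerm n A}

/-!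
Choosing a base point on every cycle of a permutation `σ` of a finite set identifies `σ` with
the permutation `(i, j, z) ↦ (i, j, z + 1)` of `Σ i, Fin (c i) × ℤ/(d i)`, where `c i` is the
number of cycles of length `d i`. A permutation commuting with it preserves cycle lengths, hence
every block `i`; on a block it permutes the `c i` cycles and rotates each of them independently,
which is the wreath product `ℤ_{d i} ≀ Sym_{c i}`.

For the shift on `A^{ℤ_n}` all cycle lengths divide `n`. The configurations fixed by `σ^e`, for
`e ∣ n`, are the `q^e` configurations of period `e`, so `∑_{k ∣ e} k · c_k = q^e` and Möbius
inversion gives `c_d = α(d, q)`. The `q` cycles of length `1` contribute `ℤ_1 ≀ Sym_q = Sym_q`.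
-/

open Equiv Function

section PermLemmas

variable {X : Type*}

lemma Equiv.Perm.pow_apply_eq_self_iff_minimalPeriod_dvd (σ : Perm X) (k : ℕ) (x : X) :
    (σ ^ k) x = x ↔ minimalPeriod σ x ∣ k :=
  MulAction.pow_smul_eq_iff_minimalPeriod_dvd (a := σ) (b := x)

lemma Equiv.Perm.zpow_apply_eq_self_iff_minimalPeriod_dvd (σ : Perm X) (k : ℤ) (x : X) :
    (σ ^ k) x = x ↔ (minimalPeriod σ x : ℤ) ∣ k :=
  MulAction.zpow_smul_eq_iff_minimalPeriod_dvd (a := σ) (b := x)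

lemma Commute.minimalPeriod_apply {σ τ : Perm X} (h : Commute τ σ) (x : X) :
    minimalPeriod σ (τ x) = minimalPeriod σ x := by
  refine Nat.dvd_right_iff_eq.mp fun k => ?_
  rw [← Perm.pow_apply_eq_self_iff_minimalPeriod_dvd,
    ← Perm.pow_apply_eq_self_iff_minimalPeriod_dvd, ← Perm.mul_apply, ← (h.pow_right k).eq,
    Perm.mul_apply, τ.injective.eq_iff]

variable {I : Type*} {β : I → Type*}

lemma Equiv.Perm.minimalPeriod_sigmaCongrRight (σ : ∀ i, Perm (β i)) (x : Σ i, β i) :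
    minimalPeriod (sigmaCongrRight σ) x = minimalPeriod (σ x.1) x.2 := by
  refine Nat.dvd_right_iff_eq.mp fun k => ?_
  rw [← pow_apply_eq_self_iff_minimalPeriod_dvd, ← pow_apply_eq_self_iff_minimalPeriod_dvd,
    ← sigmaCongrRightHom_apply, ← map_pow]
  obtain ⟨i, b⟩ := x
  rw [sigmaCongrRightHom_apply, sigmaCongrRight_apply, Sigma.mk.inj_iff]
  simp

lemma Equiv.Perm.mem_range_sigmaCongrRightHom_iff (τ : Perm (Σ i, β i)) :
    τ ∈ (sigmaCongrRightHom β).range ↔ ∀ x, (τ x).1 = x.1 := by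
  constructor
  · rintro ⟨τ', rfl⟩ x
    rfl
  · intro h
    have hfib (i : I) (x : Σ i, β i) : (τ x).1 = i ↔ x.1 = i := by rw [h]
    refine ⟨fun i => (sigmaSubtype i).permCongr (τ.subtypePerm (hfib i)),
      Equiv.ext fun x => ?_⟩
    obtain ⟨i, b⟩ := x
    simp only [sigmaCongrRightHom_apply, sigmaCongrRight_apply, permCongr_apply]
    exact Sigma.ext (h ⟨i, b⟩).symm (by simp; rfl)

end PermLemmas

lemma MulEquiv.map_centralizer_singleton {G H : Type*} [Group G] [Group H] (e : G ≃* H)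
    (a : G) : (Subgroup.centralizer {a}).map e.toMonoidHom = Subgroup.centralizer {e a} := by
  ext h
  rw [Subgroup.mem_map_equiv, Subgroup.mem_centralizer_singleton_iff,
    Subgroup.mem_centralizer_singleton_iff, ← e.injective.eq_iff, map_mul, map_mul,
    e.apply_symm_apply]

def MulEquiv.piOptionEquivProd {ι : Type*} {G : Option ι → Type*} [∀ i, Mul (G i)] :
    (∀ i, G i) ≃* G none × ∀ i, G (some i) :=
  { Equiv.piOptionEquivProd with map_mul' := fun _ _ => rfl }

def disjointCycles (α : Type*) (d : ℕ) : Perm (α × ZMod d) :=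
  (Equiv.refl α).prodCongr (Equiv.addRight 1)

section DisjointCycles

variable {α : Type*} {d : ℕ}

lemma disjointCycles_zpow_apply (k : ℤ) (p : α × ZMod d) :
    (disjointCycles α d ^ k) p = (p.1, p.2 + k) := by
  induction k using Int.induction_on generalizing p with
  | zero => simp
  | succ k ih =>
    rw [zpow_add_one, Perm.mul_apply, ih]
    simp [disjointCycles]
    ring
  | pred k ih =>
    rw [zpow_sub_one, Perm.mul_apply, ih]
    simp [disjointCycles, Perm.inv_def]
    ring

lemma minimalPeriod_disjointCycles (p : α × ZMod d) :
    minimalPeriod (disjointCycles α d) p = d := by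
  refine Nat.dvd_right_iff_eq.mp fun k => ?_
  rw [← Perm.pow_apply_eq_self_iff_minimalPeriod_dvd, ← zpow_natCast, disjointCycles_zpow_apply,
    Prod.ext_iff, Int.cast_natCast, add_eq_left, ZMod.natCast_eq_zero_iff]
  exact and_iff_right rfl

lemma apply_eq_of_commute_disjointCycles {τ : Perm (α × ZMod d)}
    (hτ : Commute τ (disjointCycles α d)) (p : α × ZMod d) :
    τ p = ((τ (p.1, 0)).1, (τ (p.1, 0)).2 + p.2) := by
  obtain ⟨j, z⟩ := p
  obtain ⟨k, rfl⟩ := ZMod.intCast_surjective z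
  simpa [disjointCycles_zpow_apply] using congrArg (· (j, 0)) (hτ.zpow_right k).eq

end DisjointCycles

def sigmaDisjointCycles {I : Type*} (β : I → Type*) (d : I → ℕ) :
    Perm (Σ i, β i × ZMod (d i)) :=
  Perm.sigmaCongrRightHom _ fun i => disjointCycles (β i) (d i)

namespace GenSym

variable {d α : ℕ}

@[simp] lemma wreathAct_apply (π : Perm (Fin α)) (w : Fin α → Multiplicative (ZMod d))
    (a : Fin α) : wreathAct d α π w a = w (π.symm a) := rfl

def toPerm : GenSym d α →* Perm (Fin α × ZMod d) where
  toFun g :=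
    { toFun := fun p => (g.right p.1, p.2 + (g.left (g.right p.1)).toAdd)
      invFun := fun p => (g.right.symm p.1, p.2 - (g.left p.1).toAdd)
      left_inv := fun p => by simp
      right_inv := fun p => by simp }
  map_one' := by ext p <;> simp
  map_mul' g h := by
    ext p
    · rfl
    · simp [add_comm, add_left_comm]

@[simp] lemma toPerm_apply (g : GenSym d α) (p : Fin α × ZMod d) :
    toPerm g p = (g.right p.1, p.2 + (g.left (g.right p.1)).toAdd) := rfl

lemma toPerm_injective : Injective (toPerm : GenSym d α →* Perm (Fin α × ZMod d)) := by
  intro g h hgh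
  have hp := fun p => congrArg (· p) hgh
  simp only [toPerm_apply, Prod.mk.injEq] at hp
  have hright : g.right = h.right := Equiv.ext fun j => (hp (j, 0)).1
  refine SemidirectProduct.ext (funext fun a => ?_) hright
  simpa [hright] using (hp (h.right.symm a, 0)).2

theorem range_toPerm (α d : ℕ) :
    (toPerm : GenSym d α →* _).range = Subgroup.centralizer {disjointCycles (Fin α) d} := by
  ext τ
  rw [Subgroup.mem_centralizer_singleton_iff]
  constructor
  · rintro ⟨g, rfl⟩
    ext p <;> simp [disjointCycles, add_right_comm]
  · intro hτ
    have hrep := apply_eq_of_commute_disjointCycles (τ := τ) hτ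
    set π := fun j => (τ (j, 0)).1
    set c := fun j => (τ (j, 0)).2
    have hπ : Injective π := by
      intro j j' h
      have : τ (j, c j' - c j) = τ (j', 0) := by
        rw [hrep, hrep (j', 0)]
        simp only [π] at h
        simp [h, c]
      exact congrArg Prod.fst (τ.injective this)
    let πe := Equiv.ofBijective π (Finite.injective_iff_bijective.mp hπ)
    refine ⟨⟨fun a => Multiplicative.ofAdd (c (πe.symm a)), πe⟩, Equiv.ext fun p => ?_⟩
    rw [hrep p]
    simp [add_comm]
    exact ⟨rfl, rfl⟩

variable {I : Type*} (d m : I → ℕ)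

def piToPerm : (∀ i, GenSym (d i) (m i)) →* Perm (Σ i, Fin (m i) × ZMod (d i)) :=
  (Perm.sigmaCongrRightHom _).comp (MonoidHom.piMap fun _ => toPerm)

lemma piToPerm_injective : Injective (piToPerm d m) :=
  Perm.sigmaCongrRightHom_injective.comp fun _ _ h =>
    funext fun i => toPerm_injective (congrFun h i)

theorem range_piToPerm (hd : Injective d) :
    (piToPerm d m).range = Subgroup.centralizer {sigmaDisjointCycles (fun i => Fin (m i)) d} := by
  ext τ
  rw [Subgroup.mem_centralizer_singleton_iff]
  constructor
  · rintro ⟨g, rfl⟩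
    have hg : Commute (fun i => toPerm (g i)) fun i => disjointCycles (Fin (m i)) (d i) :=
      funext fun i => Subgroup.mem_centralizer_singleton_iff.mp
        ((range_toPerm _ _).le ⟨g i, rfl⟩)
    exact (hg.map (Perm.sigmaCongrRightHom _)).eq
  · intro hτ
    -- `τ` preserves cycle lengths, and the length determines the block.
    have hfib : ∀ x, (τ x).1 = x.1 := fun x => hd <| by
      simpa [sigmaDisjointCycles, Perm.minimalPeriod_sigmaCongrRight,
        minimalPeriod_disjointCycles] using Commute.minimalPeriod_apply (τ := τ) hτ x
    obtain ⟨τ', rfl⟩ := (Perm.mem_range_sigmaCongrRightHom_iff τ).mpr hfib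
    have hτ' : ∀ i, τ' i ∈ Subgroup.centralizer {disjointCycles (Fin (m i)) (d i)} := fun i =>
      Subgroup.mem_centralizer_singleton_iff.mpr
        (congrFun (Perm.sigmaCongrRightHom_injective
          (by simpa only [sigmaDisjointCycles, ← map_mul] using hτ)) i)
    simp only [← range_toPerm] at hτ'
    choose g hg using hτ'
    exact ⟨g, congrArg (Perm.sigmaCongrRightHom _) (funext hg)⟩

noncomputable def oneMulEquiv (α : ℕ) : GenSym 1 α ≃* Perm (Fin α) :=
  MulEquiv.ofBijective SemidirectProduct.rightHom
    ⟨fun _ _ h => SemidirectProduct.ext (Subsingleton.elim _ _) h,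
      SemidirectProduct.rightHom_surjective⟩

end GenSym

namespace Equiv.Perm

variable {X : Type*} (σ : Perm X)

abbrev Cycles : Type _ := Quotient (SameCycle.setoid σ)

noncomputable def cycleLength (ω : σ.Cycles) : ℕ := minimalPeriod σ ω.out

/-- A point of a cycle of length `k`, given by its offset from the base point `ω.out`. -/
noncomputable def cycleCoordAt (k : ℕ) :
    {ω : σ.Cycles // σ.cycleLength ω = k} × ZMod k → X :=
  fun p => (σ ^ (p.2.cast : ℤ)) p.1.1.out

variable {σ}

lemma zpow_apply_eq_zpow_apply_iff {a b : ℤ} {x : X} :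
    (σ ^ a) x = (σ ^ b) x ↔ (a : ZMod (minimalPeriod σ x)) = b := by
  have : (σ ^ a) x = (σ ^ b) ((σ ^ (a - b)) x) := by
    rw [← mul_apply, ← zpow_add, add_sub_cancel]
  rw [this, (σ ^ b).injective.eq_iff, zpow_apply_eq_self_iff_minimalPeriod_dvd,
    ← ZMod.intCast_eq_intCast_iff_dvd_sub, eq_comm]

lemma minimalPeriod_zpow_apply (k : ℤ) (x : X) :
    minimalPeriod σ ((σ ^ k) x) = minimalPeriod σ x :=
  ((Commute.refl σ).zpow_left k).minimalPeriod_apply x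

lemma cycleLength_mk (x : X) : σ.cycleLength ⟦x⟧ = minimalPeriod σ x := by
  obtain ⟨k, hk⟩ := Quotient.mk_out (s := SameCycle.setoid σ) x
  exact (minimalPeriod_zpow_apply k _).symm.trans (congrArg _ hk)

lemma minimalPeriod_cycleCoordAt {k : ℕ}
    (p : {ω : σ.Cycles // σ.cycleLength ω = k} × ZMod k) :
    minimalPeriod σ (σ.cycleCoordAt k p) = k := by
  rw [cycleCoordAt, minimalPeriod_zpow_apply]
  exact p.1.2

lemma cycleCoordAt_injective (k : ℕ) : Injective (σ.cycleCoordAt k) := by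
  rintro ⟨⟨ω, rfl⟩, a⟩ ⟨⟨ω', hω'⟩, b⟩ h
  change (σ ^ (a.cast : ℤ)) ω.out = (σ ^ (b.cast : ℤ)) ω'.out at h
  have hsame : SameCycle σ ω.out ω'.out := by
    rw [← sameCycle_zpow_left (n := a.cast), ← sameCycle_zpow_right (n := b.cast), h]
  obtain rfl : ω = ω' := by
    rw [← Quotient.out_eq ω, ← Quotient.out_eq ω']
    exact Quotient.sound hsame
  have hab : ((a.cast : ℤ) : ZMod (σ.cycleLength ω)) = (b.cast : ℤ) :=
    zpow_apply_eq_zpow_apply_iff.mp h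
  rw [ZMod.intCast_zmod_cast, ZMod.intCast_zmod_cast] at hab
  rw [hab]

lemma mem_range_cycleCoordAt {k : ℕ} {x : X} (hx : minimalPeriod σ x = k) :
    x ∈ Set.range (σ.cycleCoordAt k) := by
  subst hx
  obtain ⟨k, hk⟩ := Quotient.mk_out (s := SameCycle.setoid σ) x
  refine ⟨(⟨⟦x⟧, cycleLength_mk x⟩, k), (zpow_apply_eq_zpow_apply_iff.mpr ?_).trans hk⟩
  rw [show minimalPeriod σ ⟦x⟧.out = minimalPeriod σ x from cycleLength_mk x,
    ZMod.intCast_zmod_cast]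

variable (σ) in
lemma card_minimalPeriod_eq (k : ℕ) :
    Nat.card {x // minimalPeriod σ x = k} =
      Nat.card {ω : σ.Cycles // σ.cycleLength ω = k} * k := by
  have hbij : Bijective fun p => (⟨σ.cycleCoordAt k p, minimalPeriod_cycleCoordAt p⟩ :
      {x // minimalPeriod σ x = k}) :=
    ⟨fun p q h => cycleCoordAt_injective k (congrArg Subtype.val h), fun ⟨_, hx⟩ =>
      let ⟨p, hp⟩ := mem_range_cycleCoordAt hx; ⟨p, Subtype.ext hp⟩⟩
  rw [← Nat.card_congr (Equiv.ofBijective _ hbij), Nat.card_prod, Nat.card_zmod]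

variable (σ) in
lemma sum_card_minimalPeriod_eq [Finite X] {e : ℕ} (he : e ≠ 0) :
    ∑ k ∈ e.divisors, Nat.card {x // minimalPeriod σ x = k} =
      Nat.card {x // (σ ^ e) x = x} := by
  rw [← Nat.card_congr (sigmaSubtypeFiberEquivSubtype (minimalPeriod σ)
    (q := (· ∈ e.divisors)) fun x => by
      rw [pow_apply_eq_self_iff_minimalPeriod_dvd, Nat.mem_divisors, and_iff_left he]),
    Nat.card_sigma, Finset.sum_coe_sort e.divisors fun k => Nat.card {x // minimalPeriod σ x = k}]

variable {D : Type*} {d : D → ℕ}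

variable (σ d) in
noncomputable def cycleCoord :
    (Σ i, {ω : σ.Cycles // σ.cycleLength ω = d i} × ZMod (d i)) → X :=
  fun p => σ.cycleCoordAt (d p.1) p.2

lemma cycleCoord_bijective (hd : Injective d) (hσ : ∀ x, minimalPeriod σ x ∈ Set.range d) :
    Bijective (σ.cycleCoord d) := by
  constructor
  · rintro ⟨i, p⟩ ⟨j, q⟩ h
    obtain rfl : i = j := hd <| by
      rw [← minimalPeriod_cycleCoordAt p, ← minimalPeriod_cycleCoordAt q]
      exact congrArg _ h
    have h' : σ.cycleCoordAt (d i) p = σ.cycleCoordAt (d i) q := h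
    rw [cycleCoordAt_injective _ h']
  · intro x
    obtain ⟨i, hi⟩ := hσ x
    obtain ⟨p, hp⟩ := mem_range_cycleCoordAt hi.symm
    exact ⟨⟨i, p⟩, hp⟩

lemma cycleCoord_sigmaDisjointCycles
    (p : Σ i, {ω : σ.Cycles // σ.cycleLength ω = d i} × ZMod (d i)) :
    σ.cycleCoord d (sigmaDisjointCycles _ d p) = σ (σ.cycleCoord d p) := by
  obtain ⟨i, ⟨ω, hω⟩, a⟩ := p
  change (σ ^ ((a + 1).cast : ℤ)) ω.out = σ ((σ ^ (a.cast : ℤ)) ω.out)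
  rw [← mul_apply, ← zpow_one_add, zpow_apply_eq_zpow_apply_iff,
    show minimalPeriod σ ω.out = d i from hω]
  push_cast [ZMod.intCast_zmod_cast]
  ring

theorem exists_permCongr_eq_sigmaDisjointCycles [Finite X] (hd : Injective d)
    (hσ : ∀ x, minimalPeriod σ x ∈ Set.range d) {c : D → ℕ}
    (hc : ∀ i, Nat.card {ω : σ.Cycles // σ.cycleLength ω = d i} = c i) :
    ∃ e : X ≃ Σ i, Fin (c i) × ZMod (d i),
      e.permCongr σ = sigmaDisjointCycles (fun i => Fin (c i)) d := by
  let f := Equiv.ofBijective _ (cycleCoord_bijective hd hσ)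
  let g := Equiv.sigmaCongrRight fun i =>
    (Finite.equivFinOfCardEq (hc i)).prodCongr (.refl (ZMod (d i)))
  refine ⟨f.symm.trans g, Equiv.ext fun y => ?_⟩
  obtain ⟨x, rfl⟩ := (f.symm.trans g).surjective y
  obtain ⟨p, rfl⟩ := f.surjective x
  have hf : f (sigmaDisjointCycles _ d p) = σ (f p) := cycleCoord_sigmaDisjointCycles p
  rw [permCongr_apply, symm_apply_apply, ← hf]
  simp only [trans_apply, symm_apply_apply]
  rfl

variable (σ) in
theorem nonempty_centralizer_mulEquiv_pi_genSym [Finite X] (hd : Injective d)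
    (hσ : ∀ x, minimalPeriod σ x ∈ Set.range d) {c : D → ℕ}
    (hc : ∀ i, Nat.card {ω : σ.Cycles // σ.cycleLength ω = d i} = c i) :
    Nonempty (Subgroup.centralizer {σ} ≃* ∀ i, GenSym (d i) (c i)) := by
  obtain ⟨e, he⟩ := exists_permCongr_eq_sigmaDisjointCycles hd hσ hc
  have hmap : (Subgroup.centralizer {σ}).map e.permCongrHom.toMonoidHom =
      (GenSym.piToPerm d c).range := by
    rw [MulEquiv.map_centralizer_singleton, GenSym.range_piToPerm d c hd]
    exact congrArg (fun τ => Subgroup.centralizer {τ}) he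
  exact ⟨(e.permCongrHom.subgroupMap _).trans ((MulEquiv.subgroupCongr hmap).trans
    (MonoidHom.ofInjective (GenSym.piToPerm_injective d c)).symm)⟩

end Equiv.Perm

section Shift

variable (n : ℕ) (A : Type*)

lemma shiftPerm_zpow_apply (k : ℤ) (x : ZMod n → A) (i : ZMod n) :
    ((shiftPerm n A ^ k) x) i = x (i - k) := by
  induction k using Int.induction_on generalizing x with
  | zero => simp
  | succ k ih =>
    rw [zpow_add_one, Perm.mul_apply, ih]
    simp [shiftPerm, sub_sub]
  | pred k ih =>
    rw [zpow_sub_one, Perm.mul_apply, ih]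
    simp [shiftPerm, Perm.inv_def]
    ring_nf

lemma minimalPeriod_shiftPerm_dvd (x : ZMod n → A) : minimalPeriod (shiftPerm n A) x ∣ n := by
  rw [← Perm.pow_apply_eq_self_iff_minimalPeriod_dvd]
  funext i
  simpa using shiftPerm_zpow_apply n A n x i

lemma apply_eq_apply_of_castHom_eq {e : ℕ} (he : e ∣ n) {x : ZMod n → A}
    (hx : (shiftPerm n A ^ e) x = x) {a b : ZMod n}
    (hab : ZMod.castHom he (ZMod e) a = ZMod.castHom he (ZMod e) b) : x a = x b := by
  obtain ⟨s, rfl⟩ := ZMod.intCast_surjective a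
  obtain ⟨t, rfl⟩ := ZMod.intCast_surjective b
  rw [map_intCast, map_intCast, ZMod.intCast_eq_intCast_iff_dvd_sub] at hab
  obtain ⟨k, hk⟩ := hab
  have hfix : (shiftPerm n A ^ ((e : ℤ) * k)) x = x := by
    rw [zpow_mul, zpow_natCast]
    exact Perm.zpow_apply_eq_self_of_apply_eq_self hx k
  rw [← congrFun hfix (t : ZMod n), shiftPerm_zpow_apply]
  congr 1
  push_cast [← hk]
  ring

lemma card_fixedPoints_shiftPerm_pow {e : ℕ} [NeZero e] (he : e ∣ n) :
    Nat.card {x // (shiftPerm n A ^ e) x = x} = Nat.card A ^ e := by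
  let π := ZMod.castHom he (ZMod e)
  have hfix (y : ZMod e → A) : (shiftPerm n A ^ e) (y ∘ π) = y ∘ π := by
    funext i
    rw [← zpow_natCast, shiftPerm_zpow_apply, Int.cast_natCast, comp_apply, comp_apply,
      map_sub, map_natCast, ZMod.natCast_self, sub_zero]
  have hbij : Bijective fun y : ZMod e → A =>
      (⟨y ∘ π, hfix y⟩ : {x // (shiftPerm n A ^ e) x = x}) := by
    refine ⟨fun y y' h => (ZMod.castHom_surjective he).injective_comp_right
      (congrArg Subtype.val h), fun ⟨x, hx⟩ => ⟨fun j => x ((j.cast : ℤ) : ZMod n), ?_⟩⟩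
    refine Subtype.ext (funext fun i => apply_eq_apply_of_castHom_eq n A he hx ?_)
    simp [π]
  rw [← Nat.card_congr (Equiv.ofBijective _ hbij), Nat.card_fun, Nat.card_zmod]

open ArithmeticFunction in
lemma card_cycles_shiftPerm [Finite A] {d : ℕ} (hd : d ∈ n.divisors) :
    Nat.card {ω : (shiftPerm n A).Cycles // (shiftPerm n A).cycleLength ω = d} =
      necklace d (Nat.card A) := by
  have hn : n ≠ 0 := (Nat.mem_divisors.mp hd).2
  have : NeZero n := ⟨hn⟩
  set σ := shiftPerm n A
  have hsum : ∀ e ∈ (n.divisors : Set ℕ),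
      ∑ k ∈ e.divisors, (Nat.card {x // minimalPeriod σ x = k} : ℤ) =
        (Nat.card A : ℤ) ^ e := by
    intro e he
    have : NeZero e := ⟨Nat.ne_of_gt (Nat.pos_of_mem_divisors he)⟩
    rw [← Nat.cast_sum, σ.sum_card_minimalPeriod_eq (NeZero.ne e),
      card_fixedPoints_shiftPerm_pow n A (Nat.dvd_of_mem_divisors he)]
    push_cast
    rfl
  have hmoeb := (sum_eq_iff_sum_smul_moebius_eq_on' (n.divisors : Set ℕ)
    (fun m e hme he => Nat.mem_divisors.mpr ⟨hme.trans (Nat.dvd_of_mem_divisors he), hn⟩)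
    (by simp)).mp hsum d hd
  rw [Nat.sum_divisorsAntidiagonal' (f := fun a b => moebius a • (Nat.card A : ℤ) ^ b),
    σ.card_minimalPeriod_eq] at hmoeb
  simp only [smul_eq_mul] at hmoeb
  rw [necklace, hmoeb, Nat.cast_mul, Int.mul_ediv_cancel _ (by exact_mod_cast
    (Nat.pos_of_mem_divisors hd).ne'), Int.toNat_natCast]

/-- The divisors of `n`, with `1` indexed by `none` so that its factor `Sym_q` splits off. -/
def divisorOfOption (o : Option {d : ℕ // d ∈ n.divisors ∧ d ≠ 1}) : ℕ :=
  o.elim 1 Subtype.val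

lemma divisorOfOption_injective : Injective (divisorOfOption n) := by
  intro a b
  rcases a with _ | ⟨d, -, hd⟩ <;> rcases b with _ | ⟨d', -, hd'⟩ <;> intro h
  · rfl
  · exact (hd' h.symm).elim
  · exact (hd h).elim
  · exact congrArg some (Subtype.ext h)

lemma divisorOfOption_mem_divisors [NeZero n] :
    ∀ o, divisorOfOption n o ∈ n.divisors
  | none => Nat.one_mem_divisors.mpr (NeZero.ne n)
  | some d => d.2.1

lemma minimalPeriod_shiftPerm_mem_range [NeZero n] (x : ZMod n → A) :
    minimalPeriod (shiftPerm n A) x ∈ Set.range (divisorOfOption n) := by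
  by_cases h1 : minimalPeriod (shiftPerm n A) x = 1
  · exact ⟨none, h1.symm⟩
  · exact ⟨some ⟨_, Nat.mem_divisors.mpr ⟨minimalPeriod_shiftPerm_dvd n A x, NeZero.ne n⟩,
      h1⟩, rfl⟩

end Shift

lemma necklace_one (q : ℕ) : necklace 1 q = q := by
  simp [necklace]

theorem ICA_iso_general (n : ℕ) (hn : 2 ≤ n) (A : Type*) [Fintype A] (q : ℕ)
    (hq : Fintype.card A = q) :
    Nonempty (↥(ICAsub n A) ≃*
      ((∀ d : {d : ℕ // d ∈ n.divisors ∧ d ≠ 1}, GenSym d.1 (necklace d.1 q)) ×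
        Equiv.Perm (Fin q))) := by
  have : NeZero n := ⟨by omega⟩
  obtain ⟨φ⟩ := (shiftPerm n A).nonempty_centralizer_mulEquiv_pi_genSym
    (divisorOfOption_injective n) (minimalPeriod_shiftPerm_mem_range n A)
    (c := fun o => necklace (divisorOfOption n o) q) fun o => by
      rw [card_cycles_shiftPerm n A (divisorOfOption_mem_divisors n o), Nat.card_eq_fintype_card,
        hq]
  exact ⟨φ.trans <| MulEquiv.piOptionEquivProd.trans <| MulEquiv.prodComm.trans <|
    MulEquiv.prodCongr (.refl _) <|
      (GenSym.oneMulEquiv _).trans (finCongr (necklace_one q)).permCongrHom⟩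

/-- Let n ≥ 2 and A a finite set of size q ≥ 2.  Then ICA(ℤ_n;A) is isomorphic
to the direct product of the generalized symmetric groups ℤ_d ≀ Sym_{α(d,q)},
over the divisors d ≠ 1 of n, with Sym_q. -/
theorem ICA_iso (n : ℕ) (hn : 2 ≤ n) (A : Type*) [Fintype A] (q : ℕ)
    (hq : Fintype.card A = q) (hq2 : 2 ≤ q) :
    Nonempty (↥(ICAsub n A) ≃*
      ((∀ d : {d : ℕ // d ∈ n.divisors ∧ d ≠ 1}, GenSym d.1 (necklace d.1 q)) ×
        Equiv.Perm (Fin q))) :=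
  ICA_iso_general n hn A q hq
end

section
/- For all integers d ≥ 2 and α ≥ 2, the rank of the generalized symmetric group ℤ_d ≀ Sym_α is exactly 2. -/
/-- The rank of a group: the least cardinality of a generating subset. -/
noncomputable def grank (G : Type*) [Group G] : ℕ :=
  sInf {k : ℕ | ∃ H : Finset G, H.card = k ∧ Subgroup.closure (H : Set G) = ⊤}


/-!
Take `r = (e₀, ρ)` with `ρ = (0 1 … α-1)`, and `t = (0 1)`. When `ρσρ⁻¹` fixes `0` it fixes
the vector `e₀`, so `r σ r⁻¹ = ρσρ⁻¹`; hence conjugation by `r` carries `(i i+1)` to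
`(i+1 i+2)` for `i + 2 < α`, and `⟨r, t⟩` contains all adjacent transpositions, i.e. all of
`Sym_α`. Then `e₀ = r ρ⁻¹` and its `Sym_α`-conjugates `eᵢ` generate the base `(ℤ_d)^α`.
For `d ≥ 2` the generators `r` and `t` do not commute, so the group is not cyclic.
-/

open Equiv Equiv.Perm SemidirectProduct Multiplicative Subgroup

section Rank

variable {G : Type*} [Group G]

lemma grank_le_card {S : Finset G} (hS : closure (S : Set G) = ⊤) : grank G ≤ S.card :=
  Nat.sInf_le ⟨S, rfl, hS⟩

lemma two_le_card_of_closure_eq_top {a b : G} (hab : a * b ≠ b * a) {S : Finset G}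
    (hS : closure (S : Set G) = ⊤) : 2 ≤ S.card := by
  by_contra! hcard
  obtain ⟨g, hSg⟩ := Finset.card_le_one_iff_subset_singleton.mp (Nat.lt_succ_iff.mp hcard)
  have hg : zpowers g = ⊤ := by
    rw [zpowers_eq_closure, eq_top_iff, ← hS]
    exact closure_mono (by simpa using Finset.coe_subset.mpr hSg)
  obtain ⟨i, rfl⟩ := mem_zpowers_iff.mp (hg ▸ mem_top a)
  obtain ⟨j, rfl⟩ := mem_zpowers_iff.mp (hg ▸ mem_top b)
  exact hab (Commute.zpow_zpow_self g i j)

lemma grank_eq_two {a b : G} (hab : a * b ≠ b * a) (hgen : closure {a, b} = ⊤) :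
    grank G = 2 := by
  classical
  have hne : a ≠ b := by rintro rfl; exact hab rfl
  have hpair : closure (({a, b} : Finset G) : Set G) = ⊤ := by simpa using hgen
  refine le_antisymm ?_ ?_
  · simpa [Finset.card_pair hne] using grank_le_card hpair
  · obtain ⟨S, hcard, hS⟩ := Nat.sInf_mem (⟨_, _, rfl, hpair⟩ :
      {k : ℕ | ∃ H : Finset G, H.card = k ∧ closure (H : Set G) = ⊤}.Nonempty)
    exact (two_le_card_of_closure_eq_top hab hS).trans_eq hcard

end Rank

lemma SemidirectProduct.inl_mul_inr_mul_inl_inv {N H : Type*} [Group N] [Group H]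
    {φ : H →* MulAut N} {n : N} {h : H} (hn : φ h n = n) :
    inl n * inr h * inl n⁻¹ = (inr h : N ⋊[φ] H) := by
  ext <;> simp [hn]

lemma eq_top_of_ofAdd_one_mem {d : ℕ} {H : Subgroup (Multiplicative (ZMod d))}
    (h : ofAdd (1 : ZMod d) ∈ H) : H = ⊤ := by
  refine (eq_top_iff' H).mpr fun x => ?_
  rw [← ofAdd_toAdd x, ← ZMod.intCast_zmod_cast (toAdd x), ← zsmul_one, ofAdd_zsmul]
  exact zpow_mem h _

lemma eq_top_of_mulSingle_ofAdd_one_mem {d : ℕ} {ι : Type*} [Finite ι] [DecidableEq ι]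
    {H : Subgroup (ι → Multiplicative (ZMod d))}
    (h : ∀ i : ι, Pi.mulSingle i (ofAdd (1 : ZMod d)) ∈ H) : H = ⊤ := by
  refine (eq_top_iff' H).mpr fun v => ?_
  induction v using Pi.mulSingle_induction with
  | one => exact one_mem H
  | mul v w hv hw => exact mul_mem hv hw
  | mulSingle i x =>
    have hi : H.comap (MonoidHom.mulSingle _ i) = ⊤ := eq_top_of_ofAdd_one_mem (h i)
    exact mem_comap.mp (hi ▸ mem_top x)

lemma finRotate_castSucc {n : ℕ} (i : Fin n) : finRotate (n + 1) i.castSucc = i.succ :=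
  Fin.ext (by simp)

lemma wreathAct_mulSingle {d α : ℕ} (π : Perm (Fin α)) (i : Fin α)
    (x : Multiplicative (ZMod d)) :
    wreathAct d α π (Pi.mulSingle i x) = Pi.mulSingle (π i) x :=
  Pi.mulSingle_comp_equiv π.symm i x

namespace GenSym

variable (d n : ℕ)

def rot (n : ℕ) : GenSym d (n + 2) :=
  inl (Pi.mulSingle (0 : Fin (n + 2)) (ofAdd (1 : ZMod d))) * inr (finRotate (n + 2))

def swap01 (n : ℕ) : GenSym d (n + 2) :=
  inr (swap 0 1)

lemma rot_mul_inr_mul_rot_inv {σ : Perm (Fin (n + 2))}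
    (hσ : (finRotate (n + 2) * σ * (finRotate (n + 2))⁻¹) 0 = 0) :
    rot d n * inr σ * (rot d n)⁻¹ = inr (finRotate (n + 2) * σ * (finRotate (n + 2))⁻¹) := by
  have hfix : wreathAct d _ (finRotate (n + 2) * σ * (finRotate (n + 2))⁻¹)
      (Pi.mulSingle 0 (ofAdd (1 : ZMod d))) =
        Pi.mulSingle (0 : Fin (n + 2)) (ofAdd (1 : ZMod d)) := by
    rw [wreathAct_mulSingle, hσ]
  rw [← inl_mul_inr_mul_inl_inv hfix, rot]
  simp only [map_mul, map_inv, mul_inv_rev, mul_assoc]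

lemma inr_mem_closure_rot_swap01 (π : Perm (Fin (n + 2))) :
    inr π ∈ closure {rot d n, swap01 d n} := by
  set K := closure {rot d n, swap01 d n}
  have hrot : rot d n ∈ K := subset_closure (by simp)
  have hadj : ∀ i : Fin (n + 1), (inr (swap i.castSucc i.succ) : GenSym d (n + 2)) ∈ K := by
    intro i
    induction i using Fin.induction with
    | zero => exact subset_closure (by simp [swap01])
    | succ i ih =>
      have hconj : finRotate (n + 2) * swap i.castSucc.castSucc i.castSucc.succ *
          (finRotate (n + 2))⁻¹ = swap i.succ.castSucc i.succ.succ := by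
        rw [← swap_apply_apply, finRotate_castSucc, Fin.succ_castSucc, finRotate_castSucc]
      rw [← hconj, ← rot_mul_inr_mul_rot_inv]
      · exact mul_mem (mul_mem hrot ih) (inv_mem hrot)
      · rw [hconj]
        exact swap_apply_of_ne_of_ne (Fin.castSucc_ne_zero_iff.mpr (Fin.succ_ne_zero i)).symm
          (Fin.succ_ne_zero _).symm
  have hperm : K.comap inr = ⊤ := by
    rw [eq_top_iff, ← closure_eq_top_of_mclosure_eq_top (mclosure_swap_castSucc_succ _),
      closure_le]
    rintro _ ⟨i, rfl⟩
    exact hadj i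
  exact mem_comap.mp (hperm ▸ mem_top π)

lemma closure_rot_swap01 : closure {rot d n, swap01 d n} = ⊤ := by
  set K := closure {rot d n, swap01 d n}
  have hperm : ∀ π, inr π ∈ K := inr_mem_closure_rot_swap01 d n
  have hbasis : ∀ i : Fin (n + 2), inl (Pi.mulSingle i (ofAdd (1 : ZMod d))) ∈ K := by
    intro i
    have h0 : inl (Pi.mulSingle (0 : Fin (n + 2)) (ofAdd (1 : ZMod d))) ∈ K := by
      have hdecomp : inl (Pi.mulSingle (0 : Fin (n + 2)) (ofAdd (1 : ZMod d))) =
          rot d n * (inr (finRotate _))⁻¹ := by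
        simp [rot]
      rw [hdecomp]
      exact mul_mem (subset_closure (by simp)) (inv_mem (hperm _))
    have hconj :=
      inl_aut (φ := wreathAct d (n + 2)) (swap 0 i) (Pi.mulSingle 0 (ofAdd (1 : ZMod d)))
    rw [wreathAct_mulSingle, swap_apply_left] at hconj
    rw [hconj]
    exact mul_mem (mul_mem (hperm _) h0) (hperm _)
  have hbase : K.comap inl = ⊤ := eq_top_of_mulSingle_ofAdd_one_mem hbasis
  refine (eq_top_iff' K).mpr fun g => ?_
  rw [← inl_left_mul_inr_right g]
  exact mul_mem (mem_comap.mp (hbase ▸ mem_top _)) (hperm _)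

lemma rot_mul_swap01_ne [Nontrivial (ZMod d)] :
    rot d n * swap01 d n ≠ swap01 d n * rot d n := by
  intro h
  have h0 := congrFun (congrArg SemidirectProduct.left h) 0
  simp [rot, swap01, wreathAct_mulSingle] at h0

end GenSym

/-- For all d ≥ 2 and α ≥ 2, the rank of the generalized symmetric group
ℤ_d ≀ Sym_α is exactly 2. -/
theorem rank_genSym (d α : ℕ) (hd : 2 ≤ d) (hα : 2 ≤ α) :
    grank (GenSym d α) = 2 := by
  obtain ⟨n, rfl⟩ : ∃ n, α = n + 2 := ⟨α - 2, by omega⟩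
  have : Fact (1 < d) := ⟨hd⟩
  exact grank_eq_two (GenSym.rot_mul_swap01_ne d n) (GenSym.closure_rot_swap01 d n)
end

section
/- Let p be an odd prime and q ≥ 2 an integer. Then (q^p − q)/p is an even integer. -/
/-- Let p be an odd prime and q ≥ 2 an integer.  Then (q^p − q)/p is an even
integer: there is α with q^p − q = p·α and α even. -/
theorem necklace_count_even (p q : ℕ) (hp : p.Prime) (hodd : Odd p) (hq : 2 ≤ q) :
    ∃ α : ℕ, q ^ p - q = p * α ∧ Even α := by
  haveI : Fact p.Prime := ⟨hp⟩
  have hle : q ≤ q ^ p := Nat.le_self_pow hp.ne_zero q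
  have hpd : p ∣ q ^ p - q := by
    have : ((q ^ p - q : ℕ) : ZMod p) = 0 := by
      push_cast [Nat.cast_sub hle]
      rw [ZMod.pow_card]
      ring
    exact (ZMod.natCast_eq_zero_iff _ _).mp this
  have h2 : 2 ∣ q ^ p - q := by
    rcases Nat.even_or_odd q with he | ho
    · exact Nat.dvd_sub ((Nat.even_pow.mpr ⟨he, hp.ne_zero⟩).two_dvd) he.two_dvd
    · exact (Nat.Odd.sub_odd (ho.pow) ho).two_dvd
  have hcop : Nat.Coprime 2 p := by
    have := hp.eq_one_or_self_of_dvd 2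
    rcases Nat.coprime_or_dvd_of_prime Nat.prime_two p with h | h
    · exact h
    · exact absurd (even_iff_two_dvd.mpr h) (Nat.not_even_iff_odd.mpr hodd)
  obtain ⟨k, hk⟩ := Nat.Coprime.mul_dvd_of_dvd_of_dvd hcop h2 hpd
  exact ⟨2 * k, by rw [hk]; ring, even_two_mul k⟩
end
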